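/- If Γ is a finite subset of α and s ∈ Z(Γ)^α, then Δ(s *_(Γ) a) ⊆ ⋃{Δ s_κ : κ ∈ Γ} ∪ (Δa − Γ). -/

import Mathlib

/-- A substitution algebra (SA) with index type `ι` and carrier `A`,
satisfying axioms (1)-(6). -/
structure SA (ι : Type) (A : Type) where
  star : ι → A → A → A
  v : ι → A
  ax1 : ∀ κ x, star κ x (v κ) = x
  ax2 : ∀ κ l, κ ≠ l → ∀ x, star κ x (v l) = v l
  ax3 : ∀ κ x, star κ (v κ) x = x
  ax4 : ∀ κ l x z, (∀ w, star l w x = x) →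
    star l x (star κ (v l) z) = star l x (star κ x z)
  ax5 : ∀ κ x y z, star κ (star κ x y) z = star κ x (star κ y z)
  ax6 : ∀ κ l, κ ≠ l → ∀ x y z, (∀ w, star l w x = x) →
    star κ x (star l y z) = star l (star κ x y) (star κ x z)

/-- The substitution operation of a function substitution algebra:
`(f *_κ g)(s) = g(s⟨κ, f(s)⟩)`. -/
def fstar {ι U : Type} [DecidableEq ι] (κ : ι) (f g : (ι → U) → U) : (ι → U) → U :=
  fun s => g (Function.update s κ (f s))

/-- The projection `V_κ(s) = s_κ`. -/
def Vproj {ι U : Type} (κ : ι) : (ι → U) → U := fun s => s κ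

/-- The dimension set `Δx = {κ : a *_κ x ≠ x for some a}`. -/
def delta {ι A : Type} (star : ι → A → A → A) (x : A) : Set ι :=
  {κ | ∃ a, star κ a x ≠ x}

/-- `Z(Γ) = {x : Δx ∩ Γ = ∅}`. -/
def Zset {ι A : Type} (star : ι → A → A → A) (Γ : Finset ι) : Set A :=
  {x | delta star x ∩ ↑Γ = ∅}

/-- Generalized substitution `s *_(Γ) a` over a finite set `Γ`, performed in
increasing index order (innermost substitution at the least index). -/
def gsubst {ι A : Type} [LinearOrder ι] (star : ι → A → A → A)
    (Γ : Finset ι) (s : ι → A) (a : A) : A :=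
  (Γ.sort (· ≤ ·)).foldl (fun b κ => star κ (s κ) b) a

/-- Homomorphism of substitution algebras. -/
def IsHom {ι A B : Type} (S : SA ι A) (T : SA ι B) (φ : A → B) : Prop :=
  (∀ κ a b, φ (S.star κ a b) = T.star κ (φ a) (φ b)) ∧ ∀ κ, φ (S.v κ) = T.v κ

/-- `S` is embeddable in `T`. -/
def Embeds {ι A B : Type} (S : SA ι A) (T : SA ι B) : Prop :=
  ∃ φ : A → B, Function.Injective φ ∧ IsHom S T φ

/-- Representable: isomorphic to a function substitution algebra, i.e. to a
subalgebra of a full function substitution algebra on some nonempty base. -/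
def Representable {ι A : Type} [LinearOrder ι] (S : SA ι A) : Prop :=
  ∃ (U : Type) (_ : Nonempty U) (φ : A → ((ι → U) → U)),
    Function.Injective φ ∧
    (∀ κ a b, φ (S.star κ a b) = fstar κ (φ a) (φ b)) ∧
    ∀ κ, φ (S.v κ) = Vproj κ

/-- Elements are strongly distinguished. -/
def StronglyDistinguished {ι A : Type} [LinearOrder ι] (S : SA ι A) : Prop :=
  ∀ s : ι → A, (∀ l, delta S.star (s l) = ∅) →
    ∀ a b, (∃ Γ : Finset ι, gsubst S.star Γ s a = gsubst S.star Γ s b) → a = b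

/-- Elements are distinguished. -/
def Distinguished {ι A : Type} (S : SA ι A) : Prop :=
  ∀ (κ : ι) (x y : A), x ≠ y → ∃ c, delta S.star c = ∅ ∧ S.star κ c x ≠ S.star κ c y

/-- The setoid of eventual equality modulo an ultrafilter, used to form
ultraproducts. -/
def uSetoid {I : Type} (F : Ultrafilter I) (A : I → Type) : Setoid (∀ i, A i) where
  r a b := ∀ᶠ i in F, a i = b i
  iseqv := ⟨fun _ => Filter.Eventually.of_forall (fun _ => rfl),
            fun h => h.mono (fun _ e => e.symm),
            fun h1 h2 => (h1.and h2).mono (fun _ e => e.1.trans e.2)⟩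

/-- The reduct of an SA to a subset `J` of the index set. -/
def reduct {ι A : Type} (S : SA ι A) (J : Set ι) : SA J A where
  star κ := S.star κ.1
  v κ := S.v κ.1
  ax1 κ x := S.ax1 κ.1 x
  ax2 κ l h x := S.ax2 κ.1 l.1 (fun e => h (Subtype.ext e)) x
  ax3 κ x := S.ax3 κ.1 x
  ax4 κ l x z h := S.ax4 κ.1 l.1 x z h
  ax5 κ x y z := S.ax5 κ.1 x y z
  ax6 κ l h x y z hw := S.ax6 κ.1 l.1 (fun e => h (Subtype.ext e)) x y z hw
lemma not_mem_delta_iff {ι A : Type} (star : ι → A → A → A) (x : A) (μ : ι) :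
    μ ∉ delta star x ↔ ∀ w, star μ w x = x := by
  simp [delta]

lemma delta_star_subset {ι A : Type} (S : SA ι A) (κ : ι) (a x : A) :
    delta S.star (S.star κ a x) ⊆ delta S.star a ∪ (delta S.star x \ {κ}) := by
  intro μ hμ
  by_contra hr
  simp only [Set.mem_union, Set.mem_diff, Set.mem_singleton_iff, not_or, not_and, not_not] at hr
  obtain ⟨ha, hx⟩ := hr
  rw [not_mem_delta_iff] at ha
  rcases eq_or_ne μ κ with rfl | hne
  · -- μ = κ case
    obtain ⟨w, hw⟩ := hμ
    exact hw (by rw [← S.ax5 μ w a x, ha w])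
  · -- μ ≠ κ
    have hxd : ∀ w, S.star μ w x = x := by
      rw [← not_mem_delta_iff]
      intro h; exact hne (hx h)
    have key : ∀ w, S.star μ w (S.star κ a x) = S.star κ a x := by
      have F : ∀ u, S.star μ (S.star κ a u) (S.star κ a x) = S.star κ a x := by
        intro u
        have h6 := S.ax6 κ μ hne.symm a u x ha
        rw [hxd u] at h6
        exact h6.symm
      have Fa : S.star μ a (S.star κ a x) = S.star κ a x := by
        have := F (S.v κ)
        rwa [S.ax1 κ a] at this
      intro w
      calc S.star μ w (S.star κ a x)
          = S.star μ w (S.star μ a (S.star κ a x)) := by rw [Fa]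
        _ = S.star μ (S.star μ w a) (S.star κ a x) := (S.ax5 μ w a _).symm
        _ = S.star μ a (S.star κ a x) := by rw [ha w]
        _ = S.star κ a x := Fa
    obtain ⟨w, hw⟩ := hμ
    exact hw (key w)

lemma delta_foldl_subset {ι A : Type} (S : SA ι A) (s : ι → A) :
    ∀ (l : List ι) (a : A),
      delta S.star (l.foldl (fun b κ => S.star κ (s κ) b) a) ⊆
        (⋃ κ ∈ {k | k ∈ l}, delta S.star (s κ)) ∪ (delta S.star a \ {k | k ∈ l}) := by
  intro l
  induction l with
  | nil => intro a μ hμ; exact Or.inr ⟨hμ, by simp⟩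
  | cons κ t ih =>
    intro a μ hμ
    have h1 := ih (S.star κ (s κ) a) hμ
    rcases h1 with h1 | h1
    · rw [Set.mem_iUnion₂] at h1
      obtain ⟨j, hj, hjd⟩ := h1
      exact Or.inl (Set.mem_biUnion (show j ∈ {k | k ∈ κ :: t} from List.mem_cons_of_mem _ hj) hjd)
    · obtain ⟨h1, h2⟩ := h1
      have := delta_star_subset S κ (s κ) a h1
      rcases this with h | h
      · exact Or.inl (Set.mem_biUnion (show κ ∈ {k | k ∈ κ :: t} from List.mem_cons_self) h)
      · right
        refine ⟨h.1, ?_⟩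
        simp only [Set.mem_setOf_eq, List.mem_cons, not_or]
        exact ⟨fun e => h.2 e, h2⟩

/-- If `s ∈ Z(Γ)^α`, then
`Δ(s *_(Γ) a) ⊆ ⋃{Δs_κ : κ ∈ Γ} ∪ (Δa − Γ)`. -/
theorem delta_gsubst_subset (ι A : Type) [LinearOrder ι] (S : SA ι A)
    (Γ : Finset ι) (s : ι → A) (hs : ∀ l, s l ∈ Zset S.star Γ) (a : A) :
    delta S.star (gsubst S.star Γ s a) ⊆
      (⋃ κ ∈ (Γ : Set ι), delta S.star (s κ)) ∪ (delta S.star a \ ↑Γ) := by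
  intro μ hμ
  have h := delta_foldl_subset S s (Γ.sort (· ≤ ·)) a hμ
  have hset : {k | k ∈ Γ.sort (· ≤ ·)} = (Γ : Set ι) := by
    ext k; simp [Finset.mem_sort]
  rw [hset] at h
  exact h
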